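/- arXiv:2008.12734 — 3 statements merged into one kernel-verified Lean document; each statement's English description precedes it below -/
import Mathlib

section
/- If g : Ω × [0,∞) → ℝ satisfies g(x,s) > 0 for s > 0 and there exists μ > 2 such that s ↦ g(x,s)/s^(μ-1) is nondecreasing and s ↦ (1/μ) s g(x,s) − G(x,s) is nondecreasing on (0,∞) (where G(x,s) = ∫₀^s g(x,t) dt), then 0 < μ G(x,s) ≤ s g(x,s) for all x ∈ Ω and s > 0. -/
open MeasureTheory intervalIntegral

/-- Ambrosetti–Rabinowitz inequality from (g₃)–(g₄). -/
theorem stmt0 {Ω : Type*} (g : Ω → ℝ → ℝ) (mu : ℝ)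
    (hcont : ∀ x : Ω, Continuous (g x))
    (hpos : ∀ x : Ω, ∀ s : ℝ, 0 < s → 0 < g x s)
    (hmu : 2 < mu)
    (hmono1 : ∀ x : Ω, MonotoneOn (fun s : ℝ => g x s / s ^ (mu - 1)) (Set.Ioi 0))
    (hmono2 : ∀ x : Ω, MonotoneOn
      (fun s : ℝ => (1 / mu) * s * g x s - ∫ t in (0:ℝ)..s, g x t) (Set.Ioi 0)) :
    ∀ x : Ω, ∀ s : ℝ, 0 < s →
      0 < mu * (∫ t in (0:ℝ)..s, g x t) ∧
      mu * (∫ t in (0:ℝ)..s, g x t) ≤ s * g x s := by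
  intro x s hs
  have hmu0 : (0:ℝ) < mu := by linarith
  have hgi : IntervalIntegrable (g x) volume 0 s := (hcont x).intervalIntegrable 0 s
  have hGpos : 0 < ∫ t in (0:ℝ)..s, g x t :=
    intervalIntegral_pos_of_pos_on hgi (fun t ht => hpos x t ht.1) hs
  refine ⟨mul_pos hmu0 hGpos, ?_⟩
  set C := g x s / s ^ (mu - 1) with hC
  have hcontC : Continuous (fun t : ℝ => C * t ^ (mu - 1)) :=
    continuous_const.mul (Real.continuous_rpow_const (by linarith))
  have hCi : IntervalIntegrable (fun t : ℝ => C * t ^ (mu - 1)) volume 0 s :=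
    hcontC.intervalIntegrable 0 s
  have key : ∀ t ∈ Set.Ioc (0:ℝ) s, g x t ≤ C * t ^ (mu - 1) := by
    intro t ht
    have h1 := hmono1 x (Set.mem_Ioi.mpr ht.1) (Set.mem_Ioi.mpr hs) ht.2
    have htp : (0:ℝ) < t ^ (mu - 1) := Real.rpow_pos_of_pos ht.1 _
    calc g x t = (g x t / t ^ (mu - 1)) * t ^ (mu - 1) := by field_simp
      _ ≤ C * t ^ (mu - 1) := mul_le_mul_of_nonneg_right h1 htp.le
  have hae : (g x) ≤ᵐ[volume.restrict (Set.Icc (0:ℝ) s)]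
      fun t => C * t ^ (mu - 1) := by
    rw [Filter.EventuallyLE, ae_restrict_iff' measurableSet_Icc]
    filter_upwards [compl_mem_ae_iff.mpr (measure_singleton (0:ℝ))] with t ht0 htmem
    have ht0' : t ≠ 0 := ht0
    exact key t ⟨lt_of_le_of_ne htmem.1 (Ne.symm ht0'), htmem.2⟩
  have hle : (∫ t in (0:ℝ)..s, g x t) ≤ ∫ t in (0:ℝ)..s, C * t ^ (mu - 1) :=
    integral_mono_ae_restrict hs.le hgi hCi hae
  have hval : (∫ t in (0:ℝ)..s, C * t ^ (mu - 1)) = C * (s ^ mu / mu) := by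
    rw [intervalIntegral.integral_const_mul, integral_rpow (Or.inl (by linarith))]
    rw [Real.zero_rpow (by linarith : mu - 1 + 1 ≠ 0)]
    ring_nf
  have hsne : s ^ (mu - 1) ≠ 0 := (Real.rpow_pos_of_pos hs _).ne'
  have hspow : s ^ mu = s ^ (mu - 1) * s := by
    rw [← Real.rpow_add_one hs.ne' (mu - 1)]; ring_nf
  calc mu * (∫ t in (0:ℝ)..s, g x t) ≤ mu * (C * (s ^ mu / mu)) := by
        rw [← hval]; exact mul_le_mul_of_nonneg_left hle hmu0.le
    _ = C * s ^ mu := by field_simp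
    _ = s * g x s := by rw [hC, hspow]; field_simp
end

section
/- Let φ : ℝ → ℝ be defined by φ(t) = (a/2) t² − h(t) where a > 0 and h : [0,∞) → ℝ is differentiable with h'(t)/t^(μ-1) strictly increasing from 0 to ∞ as t goes from 0 to ∞, for some μ > 2. Then there exists a unique t₀ > 0 with φ'(t₀) = 0, φ' > 0 on (0,t₀), and φ' < 0 on (t₀,∞). -/
open Filter

/-- Key monotonicity: if `a*s ≤ h' s` at some positive `s`, then `a*t < h' t` for all `t > s`. -/
lemma stmt4_key (a mu : ℝ) (ha : 0 < a) (hmu : 2 < mu) (h' : ℝ → ℝ)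
    (hstrict : StrictMonoOn (fun t : ℝ => h' t / t ^ (mu - 1)) (Set.Ioi 0))
    {s t : ℝ} (hs : 0 < s) (hst : s < t) (hle : a * s ≤ h' s) : a * t < h' t := by
  have ht : 0 < t := hs.trans hst
  have hps : (0:ℝ) < s ^ (mu - 1) := Real.rpow_pos_of_pos hs _
  have hpt : (0:ℝ) < t ^ (mu - 1) := Real.rpow_pos_of_pos ht _
  have hg : h' s / s ^ (mu - 1) < h' t / t ^ (mu - 1) := hstrict hs (hs.trans hst) hst
  have h1 : a * s / s ^ (mu - 1) ≤ h' s / s ^ (mu - 1) :=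
    div_le_div_of_nonneg_right hle hps.le
  -- a*t / t^(mu-1) < a*s / s^(mu-1)
  have h2 : a * t / t ^ (mu - 1) < a * s / s ^ (mu - 1) := by
    rw [div_lt_div_iff₀ hpt hps]
    have hss : s ^ (mu - 1) = s * s ^ (mu - 2) := by
      rw [show mu - 1 = 1 + (mu - 2) by ring, Real.rpow_add hs, Real.rpow_one]
    have htt : t ^ (mu - 1) = t * t ^ (mu - 2) := by
      rw [show mu - 1 = 1 + (mu - 2) by ring, Real.rpow_add ht, Real.rpow_one]
    have hAB : s ^ (mu - 2) < t ^ (mu - 2) :=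
      Real.rpow_lt_rpow hs.le hst (by linarith)
    have hA : (0:ℝ) < s ^ (mu - 2) := Real.rpow_pos_of_pos hs _
    rw [hss, htt]
    nlinarith [mul_pos hs ht, mul_pos (mul_pos ha hs) ht]
  have : a * t / t ^ (mu - 1) < h' t / t ^ (mu - 1) := lt_of_lt_of_le (h2.trans_le h1) hg.le
  exact (div_lt_div_iff_of_pos_right hpt).mp this

/-- existence and uniqueness of the critical scaling t₀ for
φ(t) = (a/2)t² − h(t), with φ' > 0 before t₀ and φ' < 0 after. -/
theorem stmt4 (a mu : ℝ) (ha : 0 < a) (hmu : 2 < mu)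
    (h h' : ℝ → ℝ) (hh0 : h 0 = 0)
    (hderiv : ∀ t : ℝ, 0 ≤ t → HasDerivWithinAt h (h' t) (Set.Ici 0) t)
    (hh'nonneg : ∀ t : ℝ, 0 ≤ t → 0 ≤ h' t)
    (hstrict : StrictMonoOn (fun t : ℝ => h' t / t ^ (mu - 1)) (Set.Ioi 0))
    (hlim0 : Tendsto (fun t : ℝ => h' t / t ^ (mu - 1)) (nhdsWithin 0 (Set.Ioi 0)) (nhds 0))
    (hlimtop : Tendsto (fun t : ℝ => h' t / t ^ (mu - 1)) atTop atTop) :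
    ∃! t₀ : ℝ, 0 < t₀ ∧ a * t₀ - h' t₀ = 0 ∧
      (∀ t : ℝ, 0 < t → t < t₀ → 0 < a * t - h' t) ∧
      (∀ t : ℝ, t₀ < t → a * t - h' t < 0) := by
  -- find t₁ ∈ (0,1) with g t₁ < a
  have hev1 : ∀ᶠ t in nhdsWithin (0:ℝ) (Set.Ioi 0),
      h' t / t ^ (mu - 1) < a ∧ t ∈ Set.Ioo (0:ℝ) 1 := by
    filter_upwards [hlim0.eventually (eventually_lt_nhds ha),
      Ioo_mem_nhdsGT_of_mem (by constructor <;> norm_num : (0:ℝ) ∈ Set.Ico (0:ℝ) 1)] with t h1 h2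
    exact ⟨h1, h2⟩
  obtain ⟨t₁, hgt₁, ht₁0, ht₁1⟩ :
      ∃ t₁, h' t₁ / t₁ ^ (mu - 1) < a ∧ 0 < t₁ ∧ t₁ < 1 := by
    obtain ⟨t₁, h1, h2⟩ := hev1.exists
    exact ⟨t₁, h1, h2.1, h2.2⟩
  -- find t₂ > 1 with g t₂ > a
  obtain ⟨t₂, hgt₂, ht₂1⟩ :=
    ((hlimtop.eventually_gt_atTop a).and (eventually_gt_atTop (1:ℝ))).exists
  have ht₂0 : (0:ℝ) < t₂ := lt_trans one_pos ht₂1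
  -- φ' t₁ > 0
  have hp1 : 0 < a * t₁ - h' t₁ := by
    have hps : (0:ℝ) < t₁ ^ (mu - 1) := Real.rpow_pos_of_pos ht₁0 _
    have h1 : h' t₁ < a * t₁ ^ (mu - 1) := by
      have := (div_lt_iff₀ hps).mp hgt₁
      linarith
    have h2 : t₁ ^ (mu - 1) < t₁ := by
      calc t₁ ^ (mu - 1) < t₁ ^ (1:ℝ) :=
            Real.rpow_lt_rpow_of_exponent_gt ht₁0 ht₁1 (by linarith)
        _ = t₁ := Real.rpow_one t₁
    nlinarith
  -- φ' t₂ < 0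
  have hp2 : a * t₂ - h' t₂ < 0 := by
    have hps : (0:ℝ) < t₂ ^ (mu - 1) := Real.rpow_pos_of_pos ht₂0 _
    have h1 : a * t₂ ^ (mu - 1) < h' t₂ := by
      have := (lt_div_iff₀ hps).mp hgt₂
      linarith
    have h2 : t₂ < t₂ ^ (mu - 1) := by
      calc t₂ = t₂ ^ (1:ℝ) := (Real.rpow_one t₂).symm
        _ < t₂ ^ (mu - 1) := Real.rpow_lt_rpow_of_exponent_lt ht₂1 (by linarith)
    nlinarith
  have ht₁2 : t₁ < t₂ := ht₁1.trans ht₂1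
  -- Darboux
  have hD : ∀ x ∈ Set.Icc t₁ t₂,
      HasDerivWithinAt (fun t => a / 2 * t ^ 2 - h t) (a * x - h' x) (Set.Icc t₁ t₂) x := by
    intro x hx
    have hx0 : 0 ≤ x := (ht₁0.trans_le hx.1).le
    have h1 : HasDerivAt (fun t : ℝ => a / 2 * t ^ 2) (a * x) x := by
      have := (hasDerivAt_pow 2 x).const_mul (a / 2)
      simpa using this.congr_deriv (by ring)
    have h2 : HasDerivWithinAt h (h' x) (Set.Icc t₁ t₂) x :=
      (hderiv x hx0).mono (fun y hy => (ht₁0.trans_le hy.1).le)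
    exact h1.hasDerivWithinAt.sub h2
  obtain ⟨t₀, ht₀mem, ht₀eq⟩ :=
    exists_hasDerivWithinAt_eq_of_lt_of_gt ht₁2.le hD (m := 0) hp1 hp2
  have ht₀0 : 0 < t₀ := ht₁0.trans ht₀mem.1
  have ht₀eq : a * t₀ - h' t₀ = 0 := ht₀eq
  refine ⟨t₀, ⟨ht₀0, ht₀eq, ?_, ?_⟩, ?_⟩
  · intro t ht htlt
    by_contra hcon
    push_neg at hcon
    have := stmt4_key a mu ha hmu h' hstrict ht htlt (by linarith)
    linarith
  · intro t htgt
    have := stmt4_key a mu ha hmu h' hstrict ht₀0 htgt (by linarith)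
    linarith
  · rintro t ⟨ht0, hteq, hbefore, hafter⟩
    rcases lt_trichotomy t t₀ with hlt | heq | hgt
    · have := hafter t₀ hlt
      linarith
    · exact heq
    · have := hbefore t₀ ht₀0 hgt
      linarith
end

section
/- If u is L-Lipschitz on Ω, x₀ ∈ Ω, r > 0 with B_r(x₀) ⊂ Ω, and there exists x₁ ∈ ∂B_r(x₀) with u(x₁) − 1 ≥ λ r for some λ > 0, then the spherical average satisfies ⨍_{∂B_r(x₀)} (u − 1)₊ dσ ≥ ν r, where ν > 0 depends only on N, λ, and L. -/
open MeasureTheory Metric Module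
open scoped MeasureTheory RealInnerProductSpace NNReal ENNReal Pointwise

/-- Lipschitz estimate for `Real.sqrt` away from zero. -/
lemma stmt13_sqrtLip {m a b : ℝ} (hm : 0 < m) (ha : m ≤ a) (hb : m ≤ b) :
    |Real.sqrt a - Real.sqrt b| ≤ |a - b| / (2 * Real.sqrt m) := by
  wlog h : b ≤ a generalizing a b
  · rw [abs_sub_comm, abs_sub_comm a b]; exact this hb ha (le_of_not_ge h)
  have h0 : 0 < Real.sqrt m := Real.sqrt_pos.mpr hm
  have hs : Real.sqrt b ≤ Real.sqrt a := Real.sqrt_le_sqrt h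
  rw [abs_of_nonneg (sub_nonneg.mpr hs), abs_of_nonneg (sub_nonneg.mpr h),
    le_div_iff₀ (by positivity)]
  have hden : 2 * Real.sqrt m ≤ Real.sqrt a + Real.sqrt b := by
    have h1 := Real.sqrt_le_sqrt ha
    have h2 := Real.sqrt_le_sqrt hb
    linarith
  have e1 : Real.sqrt a * Real.sqrt a = a := Real.mul_self_sqrt (hm.le.trans ha)
  have e2 : Real.sqrt b * Real.sqrt b = b := Real.mul_self_sqrt (hm.le.trans hb)
  calc (Real.sqrt a - Real.sqrt b) * (2 * Real.sqrt m)
      ≤ (Real.sqrt a - Real.sqrt b) * (Real.sqrt a + Real.sqrt b) :=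
        mul_le_mul_of_nonneg_left hden (sub_nonneg.mpr hs)
    _ = a - b := by
        have : (Real.sqrt a - Real.sqrt b) * (Real.sqrt a + Real.sqrt b)
            = Real.sqrt a * Real.sqrt a - Real.sqrt b * Real.sqrt b := by ring
        rw [this, e1, e2]

/-- On the unit sphere some coordinate is at least `1/N` in square. -/
lemma stmt13_exists_coord {N : ℕ} (hN : 1 ≤ N) (x : EuclideanSpace ℝ (Fin N))
    (hx : ‖x‖ = 1) : ∃ i, (N : ℝ)⁻¹ ≤ x i ^ 2 := by
  have hNpos : (0 : ℝ) < N := by exact_mod_cast Nat.lt_of_lt_of_le Nat.zero_lt_one hN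
  have hsum : ∑ i, x i ^ 2 = 1 := by
    have h1 : ‖x‖ ^ 2 = ∑ i, ‖x i‖ ^ 2 := by
      rw [EuclideanSpace.norm_eq]
      rw [Real.sq_sqrt (by positivity)]
    rw [hx] at h1
    simpa [Real.norm_eq_abs, sq_abs] using h1.symm
  by_contra hcon
  push_neg at hcon
  have hlt : ∑ i, x i ^ 2 < ∑ _i : Fin N, (N : ℝ)⁻¹ := by
    apply Finset.sum_lt_sum_of_nonempty
    · simp [Finset.univ_nonempty_iff, Fin.pos_iff_nonempty.mp]
      exact Fin.pos_iff_nonempty.mp (by omega)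
    · exact fun i _ => hcon i
  rw [hsum, Finset.sum_const, Finset.card_fin, nsmul_eq_mul,
    mul_inv_cancel₀ (ne_of_gt hNpos)] at hlt
  exact lt_irrefl _ hlt

/-- A bounded subset of a hyperplane has finite `(N-1)`-dimensional Hausdorff measure. -/
lemma stmt13_hyper_finite {N : ℕ} (hN : 1 ≤ N) {v : EuclideanSpace ℝ (Fin N)} (hv : v ≠ 0)
    {s : Set (EuclideanSpace ℝ (Fin N))} {R : ℝ}
    (hsv : ∀ x ∈ s, ⟪v, x⟫ = 0) (hsb : ∀ x ∈ s, ‖x‖ ≤ R) :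
    μH[((N : ℝ) - 1)] s < ⊤ := by
  set H : Submodule ℝ (EuclideanSpace ℝ (Fin N)) := (ℝ ∙ v)ᗮ with hH
  haveI : Fact (finrank ℝ (EuclideanSpace ℝ (Fin N)) = (N - 1) + 1) :=
    ⟨by rw [finrank_euclideanSpace_fin]; omega⟩
  have hfr : finrank ℝ H = N - 1 := Submodule.finrank_orthogonal_span_singleton hv
  have hd' : ((N : ℝ) - 1) = ((finrank ℝ H : ℕ) : ℝ) := by
    rw [hfr, Nat.cast_sub hN, Nat.cast_one]
  have hsub : s ⊆ (H : Set (EuclideanSpace ℝ (Fin N))) := by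
    intro x hx
    exact Submodule.mem_orthogonal_singleton_iff_inner_right.mpr (hsv x hx)
  have himg : (Subtype.val : H → EuclideanSpace ℝ (Fin N)) ''
      (Subtype.val ⁻¹' s) = s := by
    apply Set.image_preimage_eq_of_subset
    rwa [Subtype.range_coe]
  have hiso : Isometry (Subtype.val : H → EuclideanSpace ℝ (Fin N)) :=
    H.subtypeₗᵢ.isometry
  have hd0 : (0:ℝ) ≤ (N : ℝ) - 1 := by
    have : (1:ℝ) ≤ (N:ℝ) := by exact_mod_cast hN
    linarith
  rw [← himg, hiso.hausdorffMeasure_image (Or.inl hd0)]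
  have hmono : μH[((N : ℝ) - 1)] ((Subtype.val : H → EuclideanSpace ℝ (Fin N)) ⁻¹' s)
      ≤ μH[((N : ℝ) - 1)] (Metric.closedBall (0 : H) (max R 0)) := by
    apply measure_mono
    intro z hz
    rw [Metric.mem_closedBall, dist_zero_right]
    exact le_trans (by simpa using hsb _ hz) (le_max_left _ _)
  refine lt_of_le_of_lt hmono ?_
  rw [show μH[((N : ℝ) - 1)] = (μH[((finrank ℝ H : ℕ) : ℝ)] : Measure H) by rw [← hd']]
  exact (isCompact_closedBall (0 : H) (max R 0)).measure_lt_top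


/-- The unit sphere has finite `(N-1)`-dimensional Hausdorff measure. -/
lemma stmt13_sphere_finite {N : ℕ} (hN : 2 ≤ N) :
    μH[((N : ℝ) - 1)] (Metric.sphere (0 : EuclideanSpace ℝ (Fin N)) 1) < ⊤ := by
  have hN1 : 1 ≤ N := by omega
  have hd0 : (0:ℝ) ≤ (N : ℝ) - 1 := by
    have : (1:ℝ) ≤ (N:ℝ) := by exact_mod_cast hN1
    linarith
  have hNpos : (0 : ℝ) < N := by
    have : 0 < N := by omega
    exact_mod_cast this
  set K : Fin N → Set (EuclideanSpace ℝ (Fin N)) :=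
    fun i => {y | y i = 0 ∧ ‖y‖ ^ 2 ≤ 1 - (N:ℝ)⁻¹} with hK
  set g : Fin N → ℝ → EuclideanSpace ℝ (Fin N) → EuclideanSpace ℝ (Fin N) :=
    fun i ε y => y + (ε * Real.sqrt (1 - ‖y‖ ^ 2)) • EuclideanSpace.single i (1:ℝ) with hg
  set C : ℝ≥0 := 1 + (Real.sqrt N).toNNReal with hC
  -- Lipschitz bound
  have hg_lip : ∀ (i : Fin N) (ε : ℝ), |ε| = 1 → LipschitzOnWith C (g i ε) (K i) := by
    intro i ε hε
    rw [lipschitzOnWith_iff_dist_le_mul]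
    intro y hy z hz
    have hyK : ‖y‖ ^ 2 ≤ 1 - (N:ℝ)⁻¹ := hy.2
    have hzK : ‖z‖ ^ 2 ≤ 1 - (N:ℝ)⁻¹ := hz.2
    have hya : (N:ℝ)⁻¹ ≤ 1 - ‖y‖ ^ 2 := by linarith
    have hza : (N:ℝ)⁻¹ ≤ 1 - ‖z‖ ^ 2 := by linarith
    have hy1 : ‖y‖ ≤ 1 := by nlinarith [norm_nonneg y, inv_nonneg.mpr hNpos.le]
    have hz1 : ‖z‖ ≤ 1 := by nlinarith [norm_nonneg z, inv_nonneg.mpr hNpos.le]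
    have hNinv : (0:ℝ) < (N:ℝ)⁻¹ := by positivity
    have hsN : (0:ℝ) < Real.sqrt N := Real.sqrt_pos.mpr hNpos
    have hsq : |Real.sqrt (1 - ‖y‖ ^ 2) - Real.sqrt (1 - ‖z‖ ^ 2)|
        ≤ Real.sqrt N * ‖y - z‖ := by
      have h1 := stmt13_sqrtLip hNinv hya hza
      have h2 : |(1 - ‖y‖ ^ 2) - (1 - ‖z‖ ^ 2)| ≤ 2 * ‖y - z‖ := by
        have he : (1 - ‖y‖ ^ 2) - (1 - ‖z‖ ^ 2) = (‖z‖ - ‖y‖) * (‖z‖ + ‖y‖) := by ring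
        rw [he, abs_mul]
        have h3 : |‖z‖ - ‖y‖| ≤ ‖y - z‖ := by
          rw [← norm_sub_rev]
          exact abs_norm_sub_norm_le z y
        have h4 : |‖z‖ + ‖y‖| ≤ 2 := by
          rw [abs_of_nonneg (by positivity)]; linarith
        calc |‖z‖ - ‖y‖| * |‖z‖ + ‖y‖| ≤ ‖y - z‖ * 2 :=
              mul_le_mul h3 h4 (abs_nonneg _) (norm_nonneg _)
          _ = 2 * ‖y - z‖ := by ring
      have hsqrtN : Real.sqrt ((N:ℝ)⁻¹) = (Real.sqrt N)⁻¹ := Real.sqrt_inv _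
      calc |Real.sqrt (1 - ‖y‖ ^ 2) - Real.sqrt (1 - ‖z‖ ^ 2)|
          ≤ |(1 - ‖y‖ ^ 2) - (1 - ‖z‖ ^ 2)| / (2 * Real.sqrt ((N:ℝ)⁻¹)) := h1
        _ ≤ (2 * ‖y - z‖) / (2 * Real.sqrt ((N:ℝ)⁻¹)) := by gcongr
        _ = Real.sqrt N * ‖y - z‖ := by
            rw [hsqrtN]
            field_simp
    have hnorm1 : ‖EuclideanSpace.single i (1:ℝ)‖ = 1 := by
      rw [EuclideanSpace.norm_single]; exact norm_one
    have hrew : g i ε y - g i ε z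
        = (y - z) + ((ε * Real.sqrt (1 - ‖y‖ ^ 2) - ε * Real.sqrt (1 - ‖z‖ ^ 2))
            • EuclideanSpace.single i (1:ℝ)) := by
      simp only [hg]
      rw [sub_smul]
      abel
    have hCcoe : (C : ℝ) = 1 + Real.sqrt N := by
      simp [hC, Real.coe_toNNReal _ (Real.sqrt_nonneg _)]
    rw [dist_eq_norm, hrew, dist_eq_norm]
    calc ‖(y - z) + ((ε * Real.sqrt (1 - ‖y‖ ^ 2) - ε * Real.sqrt (1 - ‖z‖ ^ 2))
            • EuclideanSpace.single i (1:ℝ))‖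
        ≤ ‖y - z‖ + ‖(ε * Real.sqrt (1 - ‖y‖ ^ 2) - ε * Real.sqrt (1 - ‖z‖ ^ 2))
            • EuclideanSpace.single i (1:ℝ)‖ := norm_add_le _ _
      _ = ‖y - z‖ + |ε * Real.sqrt (1 - ‖y‖ ^ 2) - ε * Real.sqrt (1 - ‖z‖ ^ 2)| := by
          rw [norm_smul, hnorm1, mul_one, Real.norm_eq_abs]
      _ = ‖y - z‖ + |Real.sqrt (1 - ‖y‖ ^ 2) - Real.sqrt (1 - ‖z‖ ^ 2)| := by
          rw [← mul_sub, abs_mul, hε, one_mul]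
      _ ≤ ‖y - z‖ + Real.sqrt N * ‖y - z‖ := by linarith
      _ = (C : ℝ) * ‖y - z‖ := by rw [hCcoe]; ring
  -- covering
  have hcover : Metric.sphere (0 : EuclideanSpace ℝ (Fin N)) 1
      ⊆ ⋃ i : Fin N, (g i 1 '' K i ∪ g i (-1) '' K i) := by
    intro x hx
    rw [mem_sphere_zero_iff_norm] at hx
    obtain ⟨i, hi⟩ := stmt13_exists_coord hN1 x hx
    set y : EuclideanSpace ℝ (Fin N) := x - (x i) • EuclideanSpace.single i (1:ℝ) with hy
    have hyi : y i = 0 := by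
      simp [hy, EuclideanSpace.single_apply]
    have hinner : ⟪x, (x i) • EuclideanSpace.single i (1:ℝ)⟫ = x i * x i := by
      rw [real_inner_smul_right, EuclideanSpace.inner_single_right]
      simp
    have hnorm2 : ‖(x i) • EuclideanSpace.single i (1:ℝ)‖ ^ 2 = x i ^ 2 := by
      rw [norm_smul]
      simp [Real.norm_eq_abs, mul_pow, sq_abs]
    have hynorm : ‖y‖ ^ 2 = 1 - x i ^ 2 := by
      rw [hy, norm_sub_sq_real, hinner, hnorm2, hx]
      ring
    have hyK : y ∈ K i := by
      refine ⟨hyi, ?_⟩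
      rw [hynorm]; linarith
    have hsqv : Real.sqrt (1 - ‖y‖ ^ 2) = |x i| := by
      have he : 1 - ‖y‖ ^ 2 = x i ^ 2 := by rw [hynorm]; ring
      rw [he, Real.sqrt_sq_eq_abs]
    apply Set.mem_iUnion.mpr
    refine ⟨i, ?_⟩
    rcases le_or_gt 0 (x i) with hxi | hxi
    · left
      refine ⟨y, hyK, ?_⟩
      simp only [hg]
      rw [hsqv, one_mul, abs_of_nonneg hxi, hy]
      abel
    · right
      refine ⟨y, hyK, ?_⟩
      simp only [hg]
      rw [hsqv, abs_of_neg hxi, hy]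
      have he : (-1 : ℝ) * -(x i) = x i := by ring
      rw [he]
      abel
  -- conclude
  refine lt_of_le_of_lt (measure_mono hcover) ?_
  refine lt_of_le_of_lt (measure_iUnion_fintype_le _ _) ?_
  have hterm : ∀ i : Fin N, μH[((N : ℝ) - 1)] (g i 1 '' K i ∪ g i (-1) '' K i) < ⊤ := by
    intro i
    have hKfin : μH[((N : ℝ) - 1)] (K i) < ⊤ := by
      have hvne : (EuclideanSpace.single i (1:ℝ)) ≠ 0 := by
        intro h
        have h2 := congrArg (fun w : EuclideanSpace ℝ (Fin N) => w i) h
        simp [EuclideanSpace.single_apply] at h2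
      refine stmt13_hyper_finite hN1 hvne (R := 1) (fun x hx => ?_) (fun x hx => ?_)
      · rw [EuclideanSpace.inner_single_left]
        simpa using hx.1
      · nlinarith [norm_nonneg x, hx.2, inv_nonneg.mpr hNpos.le]
    have himg : ∀ ε : ℝ, |ε| = 1 → μH[((N : ℝ) - 1)] (g i ε '' K i) < ⊤ := by
      intro ε hε
      refine lt_of_le_of_lt ((hg_lip i ε hε).hausdorffMeasure_image_le hd0) ?_
      exact ENNReal.mul_lt_top
        (ENNReal.rpow_lt_top_of_nonneg hd0 ENNReal.coe_ne_top) hKfin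
    refine lt_of_le_of_lt (measure_union_le _ _) ?_
    exact ENNReal.add_lt_top.mpr ⟨himg 1 (by norm_num), himg (-1) (by norm_num)⟩
  exact ENNReal.sum_lt_top.mpr fun i _ => hterm i


set_option maxHeartbeats 1000000 in
/-- A spherical cap of radius `ρ ≤ r` has Hausdorff measure at least that of an
`(N-1)`-dimensional ball of radius `ρ/2`. -/
lemma stmt13_cap_lower {N : ℕ} (hN : 2 ≤ N) (x₀ x₁ : EuclideanSpace ℝ (Fin N)) {r ρ : ℝ}
    (hr : 0 < r) (hρ : 0 < ρ) (hρr : ρ ≤ r) (hx₁ : dist x₁ x₀ = r) :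
    μH[((N : ℝ) - 1)] (Metric.ball (0 : EuclideanSpace ℝ (Fin (N - 1))) (ρ / 2))
      ≤ μH[((N : ℝ) - 1)] (Metric.sphere x₀ r ∩ Metric.ball x₁ ρ) := by
  have hN1 : 1 ≤ N := by omega
  have hd0 : (0:ℝ) ≤ (N : ℝ) - 1 := by
    have : (1:ℝ) ≤ (N:ℝ) := by exact_mod_cast hN1
    linarith
  set w : EuclideanSpace ℝ (Fin N) := r⁻¹ • (x₁ - x₀) with hwdef
  have hw : ‖w‖ = 1 := by
    rw [hwdef, norm_smul, norm_inv, Real.norm_eq_abs, abs_of_pos hr]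
    rw [← dist_eq_norm, hx₁]
    field_simp
  have hw0 : w ≠ 0 := by
    intro h
    rw [h, norm_zero] at hw
    norm_num at hw
  haveI : Fact (finrank ℝ (EuclideanSpace ℝ (Fin N)) = (N - 1) + 1) :=
    ⟨by rw [finrank_euclideanSpace_fin]; omega⟩
  set H : Submodule ℝ (EuclideanSpace ℝ (Fin N)) := (ℝ ∙ w)ᗮ with hHdef
  set b : OrthonormalBasis (Fin (N - 1)) ℝ H :=
    OrthonormalBasis.fromOrthogonalSpanSingleton (N - 1) hw0 with hbdef
  set e : H ≃ₗᵢ[ℝ] EuclideanSpace ℝ (Fin (N - 1)) := b.repr with hedef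
  set P : EuclideanSpace ℝ (Fin N) → H := fun x => Submodule.orthogonalProjectionOnto H (x - x₀) with hPdef
  have hP : LipschitzWith 1 P := by
    have h1 : LipschitzWith 1 (fun x : EuclideanSpace ℝ (Fin N) => x - x₀) :=
      LipschitzWith.of_dist_le_mul fun x y => by rw [dist_sub_right]; simp
    have h2 : LipschitzWith 1 (fun y : EuclideanSpace ℝ (Fin N) =>
        Submodule.orthogonalProjectionOnto H y) := by
      refine ((Submodule.orthogonalProjectionOnto H).lipschitz).weaken ?_
      rw [← NNReal.coe_le_coe, coe_nnnorm]
      exact_mod_cast Submodule.orthogonalProjectionOnto_norm_le (K := H)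
    have h3 := h2.comp h1
    rw [mul_one] at h3
    exact h3
  have hball : Metric.ball (0 : H) (ρ / 2) ⊆ P '' (Metric.sphere x₀ r ∩ Metric.ball x₁ ρ) := by
    intro v hv
    rw [Metric.mem_ball, dist_zero_right] at hv
    have hvr : ‖v‖ < r := lt_of_lt_of_le hv (by linarith)
    have hvr2 : ‖v‖ ^ 2 ≤ r ^ 2 := by nlinarith [norm_nonneg v]
    set t : ℝ := Real.sqrt (r ^ 2 - ‖v‖ ^ 2) with htdef
    have ht0 : 0 ≤ t := Real.sqrt_nonneg _
    have ht2 : t ^ 2 = r ^ 2 - ‖v‖ ^ 2 := Real.sq_sqrt (by nlinarith)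
    have htr : t ≤ r := by nlinarith
    have hvw : ⟪w, (v : EuclideanSpace ℝ (Fin N))⟫ = 0 :=
      v.2 w (Submodule.mem_span_singleton_self w)
    have hnormcoe : ‖(v : EuclideanSpace ℝ (Fin N))‖ = ‖v‖ := Submodule.norm_coe v
    set x : EuclideanSpace ℝ (Fin N) := x₀ + (t • w + (v : EuclideanSpace ℝ (Fin N))) with hxdef
    have hx₁w : x₁ = x₀ + r • w := by
      rw [hwdef, smul_smul, mul_inv_cancel₀ hr.ne', one_smul]
      abel
    have hsq : ∀ s : ℝ, ‖s • w + (v : EuclideanSpace ℝ (Fin N))‖ ^ 2 = s ^ 2 + ‖v‖ ^ 2 := by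
      intro s
      rw [norm_add_sq_real, real_inner_smul_left, hvw, norm_smul, hw, hnormcoe]
      simp [Real.norm_eq_abs, mul_pow, sq_abs]
    have hx_sphere : x ∈ Metric.sphere x₀ r := by
      rw [Metric.mem_sphere, dist_eq_norm, hxdef]
      have h5 : x₀ + (t • w + (v : EuclideanSpace ℝ (Fin N))) - x₀
          = t • w + (v : EuclideanSpace ℝ (Fin N)) := by abel
      rw [h5]
      have h6 : ‖t • w + (v : EuclideanSpace ℝ (Fin N))‖ ^ 2 = r ^ 2 := by
        rw [hsq t, ht2]; ring
      have h7 := congrArg Real.sqrt h6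
      rwa [Real.sqrt_sq (norm_nonneg _), Real.sqrt_sq hr.le] at h7
    have hx_ball : x ∈ Metric.ball x₁ ρ := by
      rw [Metric.mem_ball, dist_eq_norm]
      have h5 : x - x₁ = (t - r) • w + (v : EuclideanSpace ℝ (Fin N)) := by
        rw [hxdef, hx₁w, sub_smul]
        abel
      rw [h5]
      have h6 : ‖(t - r) • w + (v : EuclideanSpace ℝ (Fin N))‖ ^ 2
          = (t - r) ^ 2 + ‖v‖ ^ 2 := hsq (t - r)
      have h7 : (t - r) ^ 2 + ‖v‖ ^ 2 < ρ ^ 2 := by nlinarith [ht2, htr, ht0, hv, norm_nonneg v, hρ]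
      have h8 : ‖(t - r) • w + (v : EuclideanSpace ℝ (Fin N))‖ ^ 2 < ρ ^ 2 := by
        rw [h6]; exact h7
      exact lt_of_pow_lt_pow_left₀ 2 hρ.le h8
    have hPx : P x = v := by
      have h5 : x - x₀ = t • w + (v : EuclideanSpace ℝ (Fin N)) := by rw [hxdef]; abel
      show Submodule.orthogonalProjectionOnto H (x - x₀) = v
      rw [h5, map_add, ContinuousLinearMap.map_smul]
      have h6 : Submodule.orthogonalProjectionOnto H w = 0 := by
        apply Submodule.orthogonalProjectionOnto_apply_of_mem_orthogonal
        rw [hHdef, Submodule.orthogonal_orthogonal]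
        exact Submodule.mem_span_singleton_self w
      have h7 : Submodule.orthogonalProjectionOnto H (v : EuclideanSpace ℝ (Fin N)) = v :=
        Submodule.orthogonalProjectionOnto_mem_subspace_eq_self v
      rw [h6, h7, smul_zero, zero_add]
    exact ⟨x, ⟨hx_sphere, hx_ball⟩, hPx⟩
  calc μH[((N : ℝ) - 1)] (Metric.ball (0 : EuclideanSpace ℝ (Fin (N - 1))) (ρ / 2))
      = μH[((N : ℝ) - 1)] (e.toIsometryEquiv '' Metric.ball (0 : H) (ρ / 2)) := by
        rw [IsometryEquiv.image_ball]
        congr 1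
        simp
    _ = μH[((N : ℝ) - 1)] (Metric.ball (0 : H) (ρ / 2)) :=
        e.toIsometryEquiv.hausdorffMeasure_image _ _
    _ ≤ μH[((N : ℝ) - 1)] (P '' (Metric.sphere x₀ r ∩ Metric.ball x₁ ρ)) :=
        measure_mono hball
    _ ≤ 1 ^ ((N : ℝ) - 1) * μH[((N : ℝ) - 1)] (Metric.sphere x₀ r ∩ Metric.ball x₁ ρ) := by
        exact_mod_cast hP.hausdorffMeasure_image_le hd0 _
    _ = μH[((N : ℝ) - 1)] (Metric.sphere x₀ r ∩ Metric.ball x₁ ρ) := by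
        rw [ENNReal.one_rpow, one_mul]


/-- a Lipschitz function exceeding 1 + λr at a point of the sphere has
spherical average of (u−1)₊ at least νr, with ν depending only on N, λ, L. -/
theorem stmt13 {N : ℕ} (hN : 2 ≤ N) (lam L : ℝ) (hlam : 0 < lam) (hL : 0 < L) :
    ∃ ν : ℝ, 0 < ν ∧
      ∀ (Ω : Set (EuclideanSpace ℝ (Fin N))) (u : EuclideanSpace ℝ (Fin N) → ℝ)
        (x₀ x₁ : EuclideanSpace ℝ (Fin N)) (r : ℝ),
        IsOpen Ω → 0 < r → Metric.closedBall x₀ r ⊆ Ω →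
        (∀ y ∈ Ω, ∀ z ∈ Ω, |u y - u z| ≤ L * ‖y - z‖) →
        x₁ ∈ Metric.sphere x₀ r → lam * r ≤ u x₁ - 1 →
        ν * r ≤ ⨍ x in Metric.sphere x₀ r, max (u x - 1) 0 ∂μH[((N : ℝ) - 1)] := by
  classical
  have hN1 : 1 ≤ N := by omega
  have hd0 : (0:ℝ) ≤ (N : ℝ) - 1 := by
    have : (1:ℝ) ≤ (N:ℝ) := by exact_mod_cast hN1
    linarith
  have hd' : ((N : ℝ) - 1)
      = ((finrank ℝ (EuclideanSpace ℝ (Fin (N - 1)))) : ℝ) := by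
    rw [finrank_euclideanSpace_fin, Nat.cast_sub hN1, Nat.cast_one]
  have hrwE' : (μH[((N : ℝ) - 1)] : Measure (EuclideanSpace ℝ (Fin (N - 1))))
      = μH[((finrank ℝ (EuclideanSpace ℝ (Fin (N - 1)))) : ℝ)] := by rw [← hd']
  -- positivity and finiteness of balls in dimension N-1
  have hballpos : ∀ ρ : ℝ, 0 < ρ →
      0 < μH[((N : ℝ) - 1)] (Metric.ball (0 : EuclideanSpace ℝ (Fin (N - 1))) ρ) := by
    intro ρ hρ
    rw [hrwE']
    exact Metric.isOpen_ball.measure_pos _ (Metric.nonempty_ball.mpr hρ)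
  have hballtop : ∀ ρ : ℝ,
      μH[((N : ℝ) - 1)] (Metric.ball (0 : EuclideanSpace ℝ (Fin (N - 1))) ρ) < ⊤ := by
    intro ρ
    rw [hrwE']
    exact lt_of_le_of_lt (measure_mono Metric.ball_subset_closedBall)
      (isCompact_closedBall _ _).measure_lt_top
  -- the constants
  set δ : ℝ := min (lam / (2 * L)) 1 with hδdef
  have hδpos : 0 < δ := lt_min (by positivity) one_pos
  have hδ1 : δ ≤ 1 := min_le_right _ _
  have hδL : L * δ ≤ lam / 2 := by
    have h1 : δ ≤ lam / (2 * L) := min_le_left _ _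
    have := mul_le_mul_of_nonneg_left h1 hL.le
    calc L * δ ≤ L * (lam / (2 * L)) := this
      _ = lam / 2 := by field_simp
  set c0 : ℝ≥0∞ := μH[((N : ℝ) - 1)]
    (Metric.ball (0 : EuclideanSpace ℝ (Fin (N - 1))) (δ / 2)) with hc0def
  have hc0pos : 0 < c0 := hballpos _ (by positivity)
  have hc0top : c0 < ⊤ := hballtop _
  set A : ℝ≥0∞ := μH[((N : ℝ) - 1)]
    (Metric.sphere (0 : EuclideanSpace ℝ (Fin N)) 1) with hAdef
  have hAtop : A < ⊤ := stmt13_sphere_finite hN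
  have hApos : 0 < A := by
    have hx1 : dist (EuclideanSpace.single (⟨0, by omega⟩ : Fin N) (1:ℝ))
        (0 : EuclideanSpace ℝ (Fin N)) = 1 := by
      rw [dist_zero_right, EuclideanSpace.norm_single]
      exact norm_one
    have h1 := stmt13_cap_lower hN (0 : EuclideanSpace ℝ (Fin N))
      (EuclideanSpace.single (⟨0, by omega⟩ : Fin N) (1:ℝ)) one_pos one_pos le_rfl hx1
    exact lt_of_lt_of_le (hballpos (1/2) (by norm_num))
      (h1.trans (measure_mono Set.inter_subset_left))
  have ha : 0 < A.toReal := ENNReal.toReal_pos hApos.ne' hAtop.ne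
  have hc : 0 < c0.toReal := ENNReal.toReal_pos hc0pos.ne' hc0top.ne
  refine ⟨lam * c0.toReal / (2 * A.toReal),
    div_pos (mul_pos hlam hc) (by positivity), ?_⟩
  intro Ω u x₀ x₁ r hΩ hr hclos hLip hx₁ hu
  set d : ℝ := (N : ℝ) - 1 with hddef
  set S : Set (EuclideanSpace ℝ (Fin N)) := Metric.sphere x₀ r with hSdef
  set f : EuclideanSpace ℝ (Fin N) → ℝ := fun x => max (u x - 1) 0 with hfdef
  set cap : Set (EuclideanSpace ℝ (Fin N)) := S ∩ Metric.ball x₁ (δ * r) with hcapdef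
  set κ : ℝ≥0 := ‖r‖₊ ^ ((N : ℝ) - 1) with hκdef
  have hκpos : 0 < κ := NNReal.rpow_pos (nnnorm_pos.mpr hr.ne')
  have hx₁d : dist x₁ x₀ = r := Metric.mem_sphere.mp hx₁
  -- measure of the sphere
  have hS_eq : μH[d] S = κ • A := by
    have h1 : S = x₀ +ᵥ Metric.sphere (0 : EuclideanSpace ℝ (Fin N)) r := by
      rw [Metric.vadd_sphere, vadd_eq_add, add_zero]
    have h2 : Metric.sphere (0 : EuclideanSpace ℝ (Fin N)) r
        = r • Metric.sphere (0 : EuclideanSpace ℝ (Fin N)) 1 := by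
      rw [smul_sphere' hr.ne', smul_zero, Real.norm_of_nonneg hr.le, mul_one]
    rw [h1, MeasureTheory.hausdorffMeasure_vadd _ (Or.inl hd0) _, h2,
      MeasureTheory.Measure.hausdorffMeasure_smul₀ hd0 hr.ne']
  -- measure of the cap
  have hcap_ge : κ • c0 ≤ μH[d] cap := by
    have h1 := stmt13_cap_lower hN x₀ x₁ hr (mul_pos hδpos hr)
      (by nlinarith) hx₁d
    have h2 : Metric.ball (0 : EuclideanSpace ℝ (Fin (N-1))) (δ * r / 2)
        = r • Metric.ball (0 : EuclideanSpace ℝ (Fin (N-1))) (δ / 2) := by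
      rw [_root_.smul_ball hr.ne', smul_zero, Real.norm_of_nonneg hr.le]
      congr 1
      ring
    have h3 : μH[d] (Metric.ball (0 : EuclideanSpace ℝ (Fin (N-1))) (δ * r / 2))
        = κ • c0 := by
      rw [h2, MeasureTheory.Measure.hausdorffMeasure_smul₀ hd0 hr.ne']
    rw [← h3]
    exact h1
  -- membership facts
  have hSsub : S ⊆ Ω := fun x hx => hclos (Metric.sphere_subset_closedBall hx)
  have hx₁Ω : x₁ ∈ Ω := hSsub hx₁
  -- continuity and integrability
  have hu_cont : ContinuousOn u Ω := by
    have hlip : LipschitzOnWith (Real.toNNReal L) u Ω := by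
      rw [lipschitzOnWith_iff_dist_le_mul]
      intro y hy z hz
      rw [Real.dist_eq, dist_eq_norm, Real.coe_toNNReal L hL.le]
      exact hLip y hy z hz
    exact hlip.continuousOn
  have hf_cont : ContinuousOn f Ω := by
    have hc : Continuous fun y : ℝ => max (y - 1) 0 :=
      (continuous_id.sub continuous_const).max continuous_const
    exact hc.comp_continuousOn hu_cont
  have hS_meas : MeasurableSet S := Metric.isClosed_sphere.measurableSet
  have hcap_meas : MeasurableSet cap := hS_meas.inter Metric.isOpen_ball.measurableSet
  have hμS_fin : μH[d] S < ⊤ := by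
    rw [hS_eq, ENNReal.smul_def, smul_eq_mul]
    exact ENNReal.mul_lt_top ENNReal.coe_lt_top hAtop
  have hμcap_fin : μH[d] cap < ⊤ :=
    lt_of_le_of_lt (measure_mono Set.inter_subset_left) hμS_fin
  have hf_meas : AEStronglyMeasurable f ((μH[d]).restrict S) :=
    (hf_cont.mono hSsub).aestronglyMeasurable hS_meas
  haveI : IsFiniteMeasure ((μH[d]).restrict S) :=
    ⟨by rw [Measure.restrict_apply_univ]; exact hμS_fin⟩
  have hbound : ∀ x ∈ S, ‖f x‖ ≤ |u x₁ - 1| + L * (2 * r) := by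
    intro x hx
    have hxΩ : x ∈ Ω := hSsub hx
    have hdist : ‖x - x₁‖ ≤ 2 * r := by
      rw [← dist_eq_norm]
      calc dist x x₁ ≤ dist x x₀ + dist x₀ x₁ := dist_triangle _ _ _
        _ = 2 * r := by
            rw [Metric.mem_sphere.mp hx, dist_comm, hx₁d]; ring
    have h1 : u x - 1 ≤ |u x₁ - 1| + L * (2 * r) := by
      have h2 : |u x - u x₁| ≤ L * ‖x - x₁‖ := hLip x hxΩ x₁ hx₁Ω
      have h3 : u x - u x₁ ≤ L * (2 * r) := by
        calc u x - u x₁ ≤ |u x - u x₁| := le_abs_self _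
          _ ≤ L * ‖x - x₁‖ := h2
          _ ≤ L * (2 * r) := mul_le_mul_of_nonneg_left hdist hL.le
      have h4 : u x₁ - 1 ≤ |u x₁ - 1| := le_abs_self _
      linarith
    rw [hfdef]
    simp only [Real.norm_eq_abs]
    rw [abs_of_nonneg (le_max_right _ _)]
    exact max_le h1 (by positivity)
  have hf_int : IntegrableOn f S μH[d] := by
    refine Integrable.mono' (integrable_const (|u x₁ - 1| + L * (2 * r))) hf_meas ?_
    exact (ae_restrict_iff' hS_meas).mpr (Filter.Eventually.of_forall hbound)
  have hf_int_cap : IntegrableOn f cap μH[d] := hf_int.mono_set Set.inter_subset_left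
  -- pointwise lower bound on the cap
  have hpt : ∀ x ∈ cap, lam * r / 2 ≤ f x := by
    intro x hx
    have hxS : x ∈ S := hx.1
    have hxΩ : x ∈ Ω := hSsub hxS
    have hxb : dist x x₁ < δ * r := Metric.mem_ball.mp hx.2
    have h2 : |u x₁ - u x| ≤ L * ‖x₁ - x‖ := hLip x₁ hx₁Ω x hxΩ
    have h3 : u x₁ - u x ≤ L * (δ * r) := by
      have h4 : ‖x₁ - x‖ ≤ δ * r := by
        rw [← dist_eq_norm, dist_comm]
        exact hxb.le
      calc u x₁ - u x ≤ |u x₁ - u x| := le_abs_self _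
        _ ≤ L * ‖x₁ - x‖ := h2
        _ ≤ L * (δ * r) := mul_le_mul_of_nonneg_left h4 hL.le
    have h5 : L * (δ * r) ≤ lam / 2 * r := by
      have := mul_le_mul_of_nonneg_right hδL hr.le
      calc L * (δ * r) = L * δ * r := by ring
        _ ≤ lam / 2 * r := this
    have h6 : lam * r / 2 ≤ u x - 1 := by nlinarith
    exact le_trans h6 (le_max_left _ _)
  -- integral lower bound
  have h_lower : lam * r / 2 * (μH[d] cap).toReal ≤ ∫ x in S, f x ∂μH[d] := by
    have h1 : ∫ _x in cap, (lam * r / 2) ∂μH[d] ≤ ∫ x in cap, f x ∂μH[d] := by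
      refine setIntegral_mono_on ?_ hf_int_cap hcap_meas hpt
      exact integrableOn_const hμcap_fin.ne
    have h2 : ∫ _x in cap, (lam * r / 2) ∂μH[d] = (μH[d] cap).toReal * (lam * r / 2) := by
      rw [setIntegral_const, smul_eq_mul]; rfl
    have h3 : ∫ x in cap, f x ∂μH[d] ≤ ∫ x in S, f x ∂μH[d] := by
      refine setIntegral_mono_set hf_int ?_ (HasSubset.Subset.eventuallyLE Set.inter_subset_left)
      exact Filter.Eventually.of_forall fun x => le_max_right _ _
    calc lam * r / 2 * (μH[d] cap).toReal = (μH[d] cap).toReal * (lam * r / 2) := by ring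
      _ ≤ ∫ x in cap, f x ∂μH[d] := by rw [← h2]; exact h1
      _ ≤ ∫ x in S, f x ∂μH[d] := h3
  -- put everything together
  have hμS_real : (μH[d] S).toReal = (κ : ℝ) * A.toReal := by
    rw [hS_eq, ENNReal.smul_def, smul_eq_mul, ENNReal.toReal_mul, ENNReal.coe_toReal]
  have hcap_real : (κ : ℝ) * c0.toReal ≤ (μH[d] cap).toReal := by
    have h1 := ENNReal.toReal_mono hμcap_fin.ne hcap_ge
    rwa [ENNReal.smul_def, smul_eq_mul, ENNReal.toReal_mul, ENNReal.coe_toReal] at h1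
  have hκR : (0:ℝ) < (κ : ℝ) := hκpos
  have hμSpos : 0 < (μH[d] S).toReal := by rw [hμS_real]; positivity
  rw [setAverage_eq, smul_eq_mul]
  have key : lam * c0.toReal / (2 * A.toReal) * r * (μH[d] S).toReal
      ≤ ∫ x in S, f x ∂μH[d] := by
    rw [hμS_real]
    calc lam * c0.toReal / (2 * A.toReal) * r * ((κ : ℝ) * A.toReal)
        = lam * r / 2 * ((κ : ℝ) * c0.toReal) := by field_simp
      _ ≤ lam * r / 2 * (μH[d] cap).toReal :=
          mul_le_mul_of_nonneg_left hcap_real (by positivity)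
      _ ≤ ∫ x in S, f x ∂μH[d] := h_lower
  calc lam * c0.toReal / (2 * A.toReal) * r
      = lam * c0.toReal / (2 * A.toReal) * r * (μH[d] S).toReal * (μH[d] S).toReal⁻¹ := by
        field_simp
    _ ≤ (∫ x in S, f x ∂μH[d]) * (μH[d] S).toReal⁻¹ :=
        mul_le_mul_of_nonneg_right key (inv_nonneg.mpr hμSpos.le)
    _ = (μH[d] S).toReal⁻¹ * ∫ x in S, f x ∂μH[d] := mul_comm _ _
end
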